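/- arXiv:1709.01358 — 2 statements merged into one kernel-verified Lean document; each statement's English description precedes it below -/
import Mathlib

section
/- For all integers n ≥ 4 and d ≥ 2, the multiplicity of the d-th cyclotomic polynomial Φ_d in [2n−2]_q!! · [n]_q = (∏_{i=1}^{n−1} [2i]_q) · [n]_q (the Poincaré polynomial of the Coxeter group of type D_n) equals: ⌊n/d⌋ if d is odd; ⌊(n−1)/(d/2)⌋ if d is even and d does not divide n; and n/(d/2) if d is even and d divides n. -/
open Polynomial

noncomputable section

/-- The `q`-analog `[i]_q = 1 + q + ⋯ + q^{i-1} ∈ ℚ[q]`. -/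
def qnum (i : ℕ) : ℚ[X] := ∑ j ∈ Finset.range i, X ^ j

/-- `[2n−2]_q!! · [n]_q = (∏_{i=1}^{n−1} [2i]_q) · [n]_q`, the Poincaré polynomial of the
Coxeter group of type `Dₙ`. -/
def qpoinD (n : ℕ) : ℚ[X] := (∏ i ∈ Finset.range (n - 1), qnum (2 * (i + 1))) * qnum n

lemma cyc_prime {d : ℕ} (hd : 2 ≤ d) : Prime (cyclotomic d ℚ) :=
  (cyclotomic.irreducible_rat (by omega)).prime

lemma em_qnum {d : ℕ} (hd : 2 ≤ d) {m : ℕ} (hm : 0 < m) :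
    emultiplicity (cyclotomic d ℚ) (qnum m) = if d ∣ m then 1 else 0 := by
  rw [qnum, ← prod_cyclotomic_eq_geom_sum hm, Finset.emultiplicity_prod (cyc_prime hd)]
  have key : ∀ i ∈ m.divisors.erase 1,
      emultiplicity (cyclotomic d ℚ) (cyclotomic i ℚ) = if i = d then 1 else 0 := by
    intro i _
    split_ifs with h
    · subst h
      refine emultiplicity_eq_of_dvd_of_not_dvd (by simp) ?_
      intro hdvd
      have h2 : cyclotomic i ℚ * cyclotomic i ℚ ∣ cyclotomic i ℚ * 1 := by
        simpa [pow_two] using hdvd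
      have := (mul_dvd_mul_iff_left (cyclotomic_ne_zero i ℚ)).mp h2
      exact (cyc_prime hd).not_unit (isUnit_of_dvd_one this)
    · exact emultiplicity_eq_zero.2
        ((Irreducible.coprime_iff_not_dvd (cyclotomic.irreducible_rat (by omega))).mp
          (cyclotomic.isCoprime_rat (Ne.symm h)))
  rw [Finset.sum_congr rfl key, Finset.sum_ite_eq' _ d (fun _ => (1 : ℕ∞))]
  have : d ∈ m.divisors.erase 1 ↔ d ∣ m := by
    simp only [Finset.mem_erase, Nat.mem_divisors, hm.ne', ne_eq, not_false_eq_true, and_true]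
    constructor
    · exact fun h => h.2
    · exact fun h => ⟨by omega, h⟩
  simp [this]

lemma em_qpoinD (n d e : ℕ) (hn : 4 ≤ n) (hd : 2 ≤ d) (he0 : 0 < e)
    (he : ∀ i, d ∣ 2 * i ↔ e ∣ i) :
    emultiplicity (cyclotomic d ℚ) (qpoinD n) =
      (((n - 1) / e + if d ∣ n then 1 else 0 : ℕ) : ℕ∞) := by
  rw [qpoinD, emultiplicity_mul (cyc_prime hd), Finset.emultiplicity_prod (cyc_prime hd),
    em_qnum hd (by omega)]
  have key : ∀ i ∈ Finset.range (n - 1),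
      emultiplicity (cyclotomic d ℚ) (qnum (2 * (i + 1)))
        = if e ∣ i + 1 then (1 : ℕ∞) else 0 := by
    intro i _
    rw [em_qnum hd (by positivity)]
    simp [he]
  rw [Finset.sum_congr rfl key, Finset.sum_boole, Nat.card_multiples]
  push_cast [apply_ite (Nat.cast : ℕ → ℕ∞)]
  rfl

lemma em_to_dvd {d : ℕ} (k : ℕ) (P : ℚ[X])
    (h : emultiplicity (cyclotomic d ℚ) P = (k : ℕ∞)) :
    cyclotomic d ℚ ^ k ∣ P ∧ ¬ cyclotomic d ℚ ^ (k + 1) ∣ P := by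
  constructor
  · exact pow_dvd_of_le_emultiplicity h.ge
  · refine not_pow_dvd_of_emultiplicity_lt ?_
    rw [h]
    exact_mod_cast lt_add_one k

/-- For all `n ≥ 4` and `d ≥ 2`, the multiplicity of `Φ_d` in `[2n−2]_q!! · [n]_q`
equals: `⌊n/d⌋` if `d` is odd; `⌊(n−1)/(d/2)⌋` if `d` is even and `d ∤ n`; and `n/(d/2)`
if `d` is even and `d ∣ n`. -/
theorem multiplicity_cyclotomic_D (n d : ℕ) (hn : 4 ≤ n) (hd : 2 ≤ d) :
    (Odd d →
      cyclotomic d ℚ ^ (n / d) ∣ qpoinD n ∧ ¬ cyclotomic d ℚ ^ (n / d + 1) ∣ qpoinD n) ∧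
    (Even d → ¬ d ∣ n →
      cyclotomic d ℚ ^ ((n - 1) / (d / 2)) ∣ qpoinD n ∧
        ¬ cyclotomic d ℚ ^ ((n - 1) / (d / 2) + 1) ∣ qpoinD n) ∧
    (Even d → d ∣ n →
      cyclotomic d ℚ ^ (n / (d / 2)) ∣ qpoinD n ∧
        ¬ cyclotomic d ℚ ^ (n / (d / 2) + 1) ∣ qpoinD n) := by
  refine ⟨fun hodd => ?_, fun heven hnd => ?_, fun heven hdn => ?_⟩
  · have hcop : Nat.Coprime d 2 := hodd.coprime_two_right
    have he : ∀ i, d ∣ 2 * i ↔ d ∣ i := fun i =>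
      ⟨fun h => Nat.Coprime.dvd_of_dvd_mul_left hcop h,
       fun h => h.mul_left 2⟩
    have key := em_qpoinD n d d hn hd (by omega) he
    have harith : (n - 1) / d + (if d ∣ n then 1 else 0) = n / d := by
      have h1 : n - 1 + 1 = n := by omega
      conv_rhs => rw [← h1, Nat.succ_div, h1]
    rw [harith] at key
    exact em_to_dvd _ _ key
  all_goals {
    obtain ⟨e, rfl⟩ : ∃ e, d = 2 * e := ⟨d / 2, by have := heven.two_dvd; omega⟩
    have he0 : 0 < e := by omega
    have he : ∀ i, 2 * e ∣ 2 * i ↔ e ∣ i := fun i =>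
      Nat.mul_dvd_mul_iff_left (by norm_num)
    have key := em_qpoinD n (2 * e) e hn hd he0 he
    have h2 : 2 * e / 2 = e := by omega
    rw [h2]
    first
    | { rw [if_neg hnd] at key
        simpa using em_to_dvd _ _ key }
    | { rw [if_pos hdn] at key
        have hen : e ∣ n := dvd_trans (dvd_mul_left e 2) hdn
        have harith : (n - 1) / e + 1 = n / e := by
          have h1 : n - 1 + 1 = n := by omega
          conv_rhs => rw [← h1, Nat.succ_div, h1, if_pos hen]
        rw [harith] at key
        exact em_to_dvd _ _ key } }


end
end

section
/- Let (W,S) be the affine Coxeter system of type G̃_2: S = {0,1,2} with m(0,1) = 3, m(1,2) = 6, m(0,2) = 2. Then the homology of the weighted complex C_*(W) is: H_0 ≅ R/(Φ_2); H_1 ≅ R/(Φ_2) ⊕ R/(Φ_3); H_2 ≅ R; and H_k = 0 for all k ≥ 3. -/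
open Polynomial CoxeterSystem

set_option synthInstance.maxHeartbeats 1000000
set_option maxHeartbeats 1000000

noncomputable section

/-- The ring `R = ℚ[q,q⁻¹]` of Laurent polynomials over `ℚ`. -/
abbrev R : Type := LaurentPolynomial ℚ

/-- The image of the `d`-th cyclotomic polynomial `Φ_d` in `R`. -/
def cyc (d : ℕ) : R := Polynomial.toLaurent (Polynomial.cyclotomic d ℚ)

/-- The `R`-module `R/(Φ_d)`. -/
abbrev CycQuot (d : ℕ) := R ⧸ Ideal.span {cyc d}

variable {B : Type*} [Fintype B] [LinearOrder B] {W : Type*} [Group W]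
  {M : CoxeterMatrix B} (cs : CoxeterSystem M W)

/-- The standard parabolic subgroup `W_σ` generated by `σ ⊆ S`. -/
def parabolic (σ : Finset B) : Subgroup W := Subgroup.closure (cs.simple '' σ)

/-- The Poincaré polynomial `W_σ(q) = Σ_{w ∈ W_σ} q^{ℓ(w)}` of the standard parabolic
subgroup `W_σ` (defined to be `0` if `W_σ` is infinite). -/
def poin (σ : Finset B) : ℚ[X] :=
  letI := Classical.dec ((parabolic cs σ : Set W).Finite)
  if h : (parabolic cs σ : Set W).Finite then ∑ w ∈ h.toFinset, X ^ cs.length w else 0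

/-- The set of simplices `σ ∈ K_W` with `|σ| = k`, i.e. the subsets of `S` of
cardinality `k` generating a finite standard parabolic subgroup. -/
abbrev KW (k : ℕ) := {σ : Finset B // σ.card = k ∧ (parabolic cs σ : Set W).Finite}

noncomputable instance (k : ℕ) : Fintype (KW cs k) := Fintype.ofFinite _

/-- The coefficient of `e_τ` in `∂ e_σ`: it is
`(−1)^{#{t ∈ σ : t < s}} · W_σ(q)/W_{σ∖{s}}(q)` if `τ = σ ∖ {s}` for some `s ∈ σ`,
and `0` otherwise. -/
def bcoeff (σ τ : Finset B) : R :=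
  ∑ s ∈ σ, if τ = σ.erase s then
      (-1 : R) ^ (σ.filter (fun t => t < s)).card *
        Polynomial.toLaurent (poin cs σ / poin cs τ)
    else 0

/-- The boundary map `∂ : C_{k+1} → C_k` of the weighted complex `C_*(W)`, where
`C_k = ⊕_{σ ∈ K_W, |σ| = k} R·e_σ`. -/
def bdry (k : ℕ) : (KW cs (k + 1) → R) →ₗ[R] (KW cs k → R) :=
  Matrix.mulVecLin (Matrix.of fun (τ : KW cs k) (σ : KW cs (k + 1)) => bcoeff cs σ.1 τ.1)

/-- The submodule of cycles in degree `k` of the weighted complex. -/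
def cycles : (k : ℕ) → Submodule R (KW cs k → R)
  | 0 => ⊤
  | (k + 1) => LinearMap.ker (bdry cs k)

/-- The `k`-th homology `H_k(C_*(W))` of the weighted complex: cycles modulo boundaries. -/
abbrev Hgy (k : ℕ) :=
  cycles cs k ⧸ Submodule.comap (cycles cs k).subtype (LinearMap.range (bdry cs k))

end

/-!
For `i, j ∈ S` with `m = m(i,j)` finite, the parabolic subgroup `W_{i,j}` consists of the products
of the alternating words `s_i s_j s_i ⋯` of length `k < 2m`; once the braid word of length `m` is
known to be reduced, these `2m` elements are distinct and have lengths `min(k, 2m - k)`, so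
`W_{i,j}(q) = (1 + q)[m]_q` with `[m]_q = 1 + q + ⋯ + q^{m-1}`. For `G̃₂` the three braid words are
checked to be reduced, and `W` to be infinite, in the action of `W` on the plane by affine
reflections. Hence `C_*(W)` is `R ← R³ ← R³` with `∂e_i = Φ₂ e_∅` and `∂e_{ij} = [m_{ij}]_q (e_j - e_i)`,
where `[3]_q = Φ₃`, `[2]_q = Φ₂` and `[6]_q = Φ₂Φ₃Φ₆`, and the homology is read off from these
divisibilities.
-/

theorem Polynomial.one_add_X_ne_zero {K : Type*} [Semiring K] [Nontrivial K] :
    (1 + X : K[X]) ≠ 0 := by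
  simpa [add_comm] using X_add_C_ne_zero (1 : K)

theorem one_add_pow_of_mul_self_eq_zero {A : Type*} [Semiring A] {N : A} (hN : N * N = 0)
    (n : ℕ) : (1 + N) ^ n = 1 + n • N := by
  induction n with
  | zero => simp
  | succ n ih =>
    rw [pow_succ, ih, add_mul, one_mul, mul_add, mul_one, smul_mul_assoc, hN, smul_zero,
      succ_nsmul', add_zero, add_assoc]

noncomputable def Submodule.quotientComapSubtypeEquiv {S M Q : Type*} [Ring S] [AddCommGroup M]
    [Module S M] [AddCommGroup Q] [Module S Q] (p N : Submodule S M) (f : M →ₗ[S] Q)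
    (hker : ∀ x ∈ p, f x = 0 ↔ x ∈ N) (hsurj : ∀ q, ∃ x ∈ p, f x = q) :
    (p ⧸ N.comap p.subtype) ≃ₗ[S] Q :=
  (Submodule.quotEquivOfEq _ _ (by ext x; exact (hker x x.2).symm)).trans
    ((f ∘ₗ p.subtype).quotKerEquivOfSurjective fun q => by
      obtain ⟨x, hx, rfl⟩ := hsurj q
      exact ⟨⟨x, hx⟩, rfl⟩)

theorem cyc_ne_zero (d : ℕ) : cyc d ≠ 0 :=
  Polynomial.toLaurent_ne_zero.mpr (cyclotomic_ne_zero d ℚ)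

namespace CoxeterSystem

variable {B : Type*} {W : Type*} [Group W] {M : CoxeterMatrix B} (cs : CoxeterSystem M W)

theorem isReduced_of_forall_map_ne [Fintype B] {G : Type*} [Monoid G] (f : W →* G) (ω : List B)
    (h : ∀ n < ω.length, ∀ v : Fin n → B, f (cs.wordProd (List.ofFn v)) ≠ f (cs.wordProd ω)) :
    cs.IsReduced ω := by
  refine le_antisymm (cs.length_wordProd_le ω) (not_lt.mp fun hlt => ?_)
  obtain ⟨ω', hω', heq⟩ := cs.exists_isReduced (cs.wordProd ω)
  have hlen : ω'.length < ω.length := by rwa [heq, hω'.eq] at hlt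
  exact h _ hlen ω'.get (by rw [List.ofFn_get, heq])

theorem alternatingWord_drop (i j : B) (k n : ℕ) :
    (alternatingWord i j (k + n)).drop n = alternatingWord i j k := by
  induction n with
  | zero => rfl
  | succ n ih => rw [← add_assoc, alternatingWord_succ', List.drop_succ_cons, ih]

theorem wordProd_alternatingWord_succ (i j : B) (k : ℕ) :
    cs.wordProd (alternatingWord i j (k + 1)) =
      cs.simple (if Even k then j else i) * cs.wordProd (alternatingWord i j k) := by
  rw [alternatingWord_succ', wordProd_cons]

theorem wordProd_alternatingWord_add_two_mul (i j : B) (k : ℕ) :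
    cs.wordProd (alternatingWord i j (k + 2 * M i j)) = cs.wordProd (alternatingWord i j k) := by
  simp only [prod_alternatingWord_eq_mul_pow, Nat.even_add, even_two_mul, iff_true,
    Nat.add_mul_div_left _ _ two_pos, pow_add, simple_mul_simple_pow, mul_one]

theorem wordProd_alternatingWord_mod (i j : B) (k : ℕ) :
    cs.wordProd (alternatingWord i j (k % (2 * M i j))) = cs.wordProd (alternatingWord i j k) := by
  conv_rhs => rw [← Nat.mod_add_div k (2 * M i j)]
  induction k / (2 * M i j) with
  | zero => rfl
  | succ q ih => rw [mul_add, mul_one, ← add_assoc, wordProd_alternatingWord_add_two_mul, ih]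

theorem wordProd_alternatingWord_two_mul_sub (i j : B) {k : ℕ} (hk : k ≤ 2 * M i j) :
    cs.wordProd (alternatingWord i j (2 * M i j - k)) = cs.wordProd (alternatingWord j i k) := by
  rw [cs.prod_alternatingWord_eq_prod_alternatingWord_sub i j _ (by omega),
    show M i j * 2 - (2 * M i j - k) = k by omega]

theorem simple_mul_wordProd_alternatingWord {i j : B} (hM : M i j ≠ 0) (k : ℕ) :
    cs.simple (if Even k then i else j) * cs.wordProd (alternatingWord i j k) =
      cs.wordProd (alternatingWord i j (k + 2 * M i j - 1)) := by
  obtain ⟨n, hn⟩ : ∃ n, M i j = n + 1 := Nat.exists_eq_add_one.mpr (Nat.pos_of_ne_zero hM)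
  rw [show k + 2 * M i j - 1 = k + 2 * n + 1 by omega,
    ← wordProd_alternatingWord_add_two_mul cs i j k, hn,
    show k + 2 * (n + 1) = k + 2 * n + 1 + 1 by ring, wordProd_alternatingWord_succ, ← mul_assoc]
  have hpar : (if Even (k + 2 * n + 1) then j else i) = if Even k then i else j := by
    by_cases h : Even k <;> simp [h, Nat.even_add_one, parity_simps]
  rw [hpar, simple_mul_simple_self, one_mul]

variable {cs} {i j : B}

theorem IsReduced.alternatingWord_of_le (hred : cs.IsReduced (braidWord M i j)) {k : ℕ}
    (hk : k ≤ M i j) : cs.IsReduced (alternatingWord i j k) := by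
  have := hred.drop (M i j - k)
  rwa [braidWord, ← Nat.add_sub_cancel' hk, Nat.add_sub_cancel_left, alternatingWord_drop] at this

theorem IsReduced.braidWord_swap (hred : cs.IsReduced (braidWord M i j)) :
    cs.IsReduced (braidWord M j i) := by
  rw [IsReduced, ← cs.wordProd_braidWord_eq, hred.eq]
  simp [M.symmetric]

theorem IsReduced.length_wordProd_alternatingWord (hred : cs.IsReduced (braidWord M i j))
    {k : ℕ} (hk : k ≤ M i j) : cs.length (cs.wordProd (alternatingWord i j k)) = k := by
  rw [(hred.alternatingWord_of_le hk).eq, length_alternatingWord]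

theorem IsReduced.length_wordProd_alternatingWord_two_mul_sub
    (hred : cs.IsReduced (braidWord M i j)) {k : ℕ} (hk : k ≤ M i j) :
    cs.length (cs.wordProd (alternatingWord i j (2 * M i j - k))) = k := by
  rw [cs.wordProd_alternatingWord_two_mul_sub i j (by omega)]
  exact hred.braidWord_swap.length_wordProd_alternatingWord (M.symmetric i j ▸ hk)

theorem IsReduced.wordProd_alternatingWord_ne (hred : cs.IsReduced (braidWord M i j)) {n : ℕ}
    (hn₀ : 0 < n) (hn : n < M i j) :
    cs.wordProd (alternatingWord i j n) ≠ cs.wordProd (alternatingWord j i n) := by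
  obtain ⟨n, rfl⟩ := Nat.exists_eq_add_one.mpr hn₀
  intro heq
  -- the letter prepended to `alternatingWord i j (n + 1)` is the first letter of
  -- `alternatingWord j i (n + 1)`, so it cancels
  have hcancel : cs.wordProd (alternatingWord i j (n + 2)) =
      cs.wordProd (alternatingWord j i n) := by
    rw [cs.wordProd_alternatingWord_succ, heq, cs.wordProd_alternatingWord_succ, ← mul_assoc]
    have hpar : (if Even (n + 1) then j else i) = if Even n then i else j := by
      by_cases h : Even n <;> simp [h, Nat.even_add_one]
    rw [hpar, simple_mul_simple_self, one_mul]
  have := cs.length_wordProd_le (alternatingWord j i n)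
  rw [← hcancel, hred.length_wordProd_alternatingWord (by omega), length_alternatingWord] at this
  omega

theorem IsReduced.injOn_wordProd_alternatingWord (hred : cs.IsReduced (braidWord M i j)) :
    Set.InjOn (fun k => cs.wordProd (alternatingWord i j k)) (Set.Iio (2 * M i j)) := by
  have hlen : ∀ k < 2 * M i j,
      cs.length (cs.wordProd (alternatingWord i j k)) = min k (2 * M i j - k) := by
    intro k hk
    rcases le_total k (M i j) with hkm | hkm
    · rw [hred.length_wordProd_alternatingWord hkm]; omega
    · rw [show k = 2 * M i j - (2 * M i j - k) by omega,
        hred.length_wordProd_alternatingWord_two_mul_sub (by omega)]; omega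
  suffices ∀ k < 2 * M i j, ∀ k' < 2 * M i j, k < k' →
      cs.wordProd (alternatingWord i j k) ≠ cs.wordProd (alternatingWord i j k') by
    intro k hk k' hk' heq
    by_contra hne
    rcases lt_or_gt_of_ne hne with h | h
    exacts [this k hk k' hk' h heq, this k' hk' k hk h heq.symm]
  intro k hk k' hk' hkk' heq
  have hlen_eq := hlen k' hk'
  rw [← heq, hlen k hk] at hlen_eq
  obtain ⟨rfl, hk₀, hkm⟩ : k' = 2 * M i j - k ∧ 0 < k ∧ k < M i j := by omega
  rw [cs.wordProd_alternatingWord_two_mul_sub i j (by omega)] at heq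
  exact hred.wordProd_alternatingWord_ne hk₀ hkm heq

end CoxeterSystem

section Parabolic

variable {B : Type*} {W : Type*} [Group W] {M : CoxeterMatrix B} (cs : CoxeterSystem M W)

theorem poin_eq_sum_of_coe_eq {σ : Finset B} {s : Finset W} (h : (parabolic cs σ : Set W) = s) :
    poin cs σ = ∑ w ∈ s, X ^ cs.length w := by
  have hfin : (parabolic cs σ : Set W).Finite := h ▸ s.finite_toSet
  rw [poin, dif_pos hfin]
  congr 1
  ext w
  simp [h]

theorem poin_empty : poin cs ∅ = 1 := by
  rw [poin_eq_sum_of_coe_eq cs (s := {1}) (by simp [parabolic]), Finset.sum_singleton,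
    cs.length_one, pow_zero]

variable [DecidableEq B]

theorem parabolic_pair_eq_range {i j : B} (hM : M i j ≠ 0) :
    (parabolic cs {i, j} : Set W) = Set.range fun k => cs.wordProd (alternatingWord i j k) := by
  have hgen : cs.simple '' ↑({i, j} : Finset B) = {cs.simple i, cs.simple j} := by
    simp [Set.image_insert_eq]
  have hmul : ∀ c, c = i ∨ c = j → ∀ k,
      cs.simple c * cs.wordProd (alternatingWord i j k) ∈
        Set.range fun k => cs.wordProd (alternatingWord i j k) := by
    intro c hc k
    by_cases hck : c = if Even k then j else i
    · exact ⟨k + 1, by simp only [cs.wordProd_alternatingWord_succ, hck]⟩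
    · have hc' : c = if Even k then i else j := by split_ifs at hck ⊢ <;> tauto
      exact ⟨k + 2 * M i j - 1, by rw [hc', cs.simple_mul_wordProd_alternatingWord hM]⟩
  apply Set.Subset.antisymm
  · intro w hw
    rw [SetLike.mem_coe, parabolic, hgen] at hw
    induction hw using Subgroup.closure_induction_left with
    | one => exact ⟨0, rfl⟩
    | mul_left x hx y _ ih =>
      obtain ⟨k, rfl⟩ := ih
      rcases hx with rfl | rfl
      exacts [hmul i (.inl rfl) k, hmul j (.inr rfl) k]
    | inv_mul_cancel x hx y _ ih =>
      obtain ⟨k, rfl⟩ := ih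
      rcases hx with rfl | rfl <;> simp only [inv_simple]
      exacts [hmul i (.inl rfl) k, hmul j (.inr rfl) k]
  · rintro _ ⟨k, rfl⟩
    induction k with
    | zero => exact one_mem _
    | succ k ih =>
      simp only [cs.wordProd_alternatingWord_succ] at ih ⊢
      refine mul_mem (Subgroup.subset_closure (Set.mem_image_of_mem _ ?_)) ih
      split_ifs <;> simp

theorem parabolic_pair_eq_image {i j : B} (hM : M i j ≠ 0) :
    (parabolic cs {i, j} : Set W) =
      (fun k => cs.wordProd (alternatingWord i j k)) '' Set.Iio (2 * M i j) := by
  rw [parabolic_pair_eq_range cs hM]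
  refine Set.Subset.antisymm ?_ (Set.image_subset_range _ _)
  rintro _ ⟨k, rfl⟩
  exact ⟨k % (2 * M i j), Nat.mod_lt _ (by omega), cs.wordProd_alternatingWord_mod i j k⟩

theorem finite_parabolic_pair {i j : B} (hM : M i j ≠ 0) :
    (parabolic cs {i, j} : Set W).Finite :=
  parabolic_pair_eq_image cs hM ▸ (Set.finite_Iio _).image _

theorem finite_parabolic_singleton (i : B) : (parabolic cs {i} : Set W).Finite := by
  simpa using finite_parabolic_pair cs (M.diagonal i ▸ one_ne_zero : M i i ≠ 0)

theorem poin_pair {i j : B} (hM : M i j ≠ 0) (hred : cs.IsReduced (braidWord M i j)) :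
    poin cs {i, j} = (1 + X) * ∑ k ∈ Finset.range (M i j), X ^ k := by
  classical
  rw [poin_eq_sum_of_coe_eq cs (s := (Finset.range (2 * M i j)).image _)
      (by rw [Finset.coe_image, Finset.coe_range, parabolic_pair_eq_image cs hM]),
    Finset.sum_image (fun k hk k' hk' => hred.injOn_wordProd_alternatingWord
      (by simpa using hk) (by simpa using hk')), two_mul, Finset.sum_range_add]
  have hlow : ∀ k ∈ Finset.range (M i j),
      X ^ cs.length (cs.wordProd (alternatingWord i j k)) = (X ^ k : ℚ[X]) := fun k hk => by
    rw [hred.length_wordProd_alternatingWord (Finset.mem_range.mp hk).le]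
  have hhigh : ∀ k ∈ Finset.range (M i j),
      X ^ cs.length (cs.wordProd (alternatingWord i j (M i j + k))) =
        (X ^ (M i j - 1 - k + 1) : ℚ[X]) := fun k hk => by
    have hk := Finset.mem_range.mp hk
    rw [show M i j + k = 2 * M i j - (M i j - k) by omega,
      hred.length_wordProd_alternatingWord_two_mul_sub (by omega),
      show M i j - 1 - k + 1 = M i j - k by omega]
  rw [Finset.sum_congr rfl hlow, Finset.sum_congr rfl hhigh,
    Finset.sum_range_reflect (fun k => (X ^ (k + 1) : ℚ[X])), add_mul, one_mul, Finset.mul_sum]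
  simp only [pow_succ, mul_comm]

theorem poin_singleton (i : B) : poin cs {i} = 1 + X := by
  have hred : cs.IsReduced (braidWord M i i) := by
    rw [braidWord, M.diagonal]
    simp [CoxeterSystem.IsReduced, alternatingWord]
  simpa using poin_pair cs (by simp) hred

end Parabolic

section WeightedComplex

variable {B : Type*} {W : Type*} [Group W] {M : CoxeterMatrix B} (cs : CoxeterSystem M W)

def emptySimplex : KW cs 0 := ⟨∅, Finset.card_empty, by simp [parabolic]⟩

theorem eq_emptySimplex (τ : KW cs 0) : τ = emptySimplex cs :=
  Subtype.ext (Finset.card_eq_zero.mp τ.2.1)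

def vertex [DecidableEq B] (i : B) : KW cs 1 :=
  ⟨{i}, Finset.card_singleton i, finite_parabolic_singleton cs i⟩

theorem vertex_bijective [DecidableEq B] : Function.Bijective (vertex cs) := by
  refine ⟨fun i j h => Finset.singleton_injective (congrArg Subtype.val h), fun σ => ?_⟩
  obtain ⟨i, hi⟩ := Finset.card_eq_one.mp σ.2.1
  exact ⟨i, Subtype.ext hi.symm⟩

noncomputable def vertexEquiv [DecidableEq B] : B ≃ KW cs 1 :=
  Equiv.ofBijective _ (vertex_bijective cs)

@[simp]
theorem vertexEquiv_symm_vertex [DecidableEq B] (i : B) :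
    (vertexEquiv cs).symm (vertex cs i) = i :=
  (vertexEquiv cs).symm_apply_apply i

theorem sum_KW_one [Fintype B] [DecidableEq B] {N : Type*} [AddCommMonoid N]
    (f : KW cs 1 → N) : ∑ σ, f σ = ∑ i, f (vertex cs i) :=
  ((vertexEquiv cs).sum_comp f).symm

theorem isEmpty_KW_of_card_le [Fintype B] [Infinite W] {k : ℕ} (hk : Fintype.card B ≤ k) :
    IsEmpty (KW cs k) := by
  refine ⟨fun ⟨σ, hcard, hfin⟩ => ?_⟩
  obtain rfl : σ = Finset.univ :=
    Finset.eq_univ_of_card σ (le_antisymm (Finset.card_le_univ σ) (hcard ▸ hk))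
  rw [parabolic, Finset.coe_univ, Set.image_univ, cs.subgroup_closure_range_simple,
    Subgroup.coe_top] at hfin
  exact Set.infinite_univ hfin

variable [LinearOrder B]

theorem bcoeff_erase {σ : Finset B} {s : B} (hs : s ∈ σ) :
    bcoeff cs σ (σ.erase s) =
      (-1) ^ (σ.filter fun t => t < s).card * toLaurent (poin cs σ / poin cs (σ.erase s)) := by
  rw [bcoeff, Finset.sum_eq_single_of_mem s hs fun t ht hts =>
    if_neg fun h => hts ((σ.erase_inj ht).mp h.symm), if_pos rfl]

theorem bcoeff_eq_zero_of_not_subset {σ τ : Finset B} (h : ¬τ ⊆ σ) : bcoeff cs σ τ = 0 :=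
  Finset.sum_eq_zero fun s _ => if_neg fun hτ : τ = σ.erase s => h (hτ ▸ σ.erase_subset s)

theorem bcoeff_singleton_empty (i : B) : bcoeff cs {i} ∅ = cyc 2 := by
  have := bcoeff_erase cs (Finset.mem_singleton_self i)
  rw [Finset.erase_singleton] at this
  simp [this, Finset.filter_singleton, poin_singleton, poin_empty, cyc, add_comm]

theorem bcoeff_pair_left {i j : B} (hij : i < j) (hM : M i j ≠ 0)
    (hred : cs.IsReduced (braidWord M i j)) :
    bcoeff cs {i, j} {i} = -toLaurent (∑ k ∈ Finset.range (M i j), X ^ k) := by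
  have := bcoeff_erase cs (s := j) (σ := {i, j}) (by simp)
  rw [show ({i, j} : Finset B).erase j = {i} by simp [Finset.erase_insert_of_ne hij.ne],
    show ({i, j} : Finset B).filter (fun t => t < j) = {i} by
      simp [Finset.filter_insert, Finset.filter_singleton, hij],
    poin_pair cs hM hred, poin_singleton, mul_div_cancel_left₀ _ one_add_X_ne_zero] at this
  simpa using this

theorem bcoeff_pair_right {i j : B} (hij : i < j) (hM : M i j ≠ 0)
    (hred : cs.IsReduced (braidWord M i j)) :
    bcoeff cs {i, j} {j} = toLaurent (∑ k ∈ Finset.range (M i j), X ^ k) := by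
  have := bcoeff_erase cs (s := i) (σ := {i, j}) (by simp)
  rw [show ({i, j} : Finset B).erase i = {j} by simp [hij.ne],
    show ({i, j} : Finset B).filter (fun t => t < i) = ∅ by
      simp [Finset.filter_insert, Finset.filter_singleton, hij.le],
    poin_pair cs hM hred, poin_singleton, mul_div_cancel_left₀ _ one_add_X_ne_zero] at this
  simpa using this

variable [Fintype B]

theorem bdry_apply (k : ℕ) (y : KW cs (k + 1) → R) (τ : KW cs k) :
    bdry cs k y τ = ∑ σ : KW cs (k + 1), bcoeff cs σ.1 τ.1 * y σ := by
  simp [bdry, Matrix.mulVec, dotProduct]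

theorem mem_cycles_succ {k : ℕ} {x : KW cs (k + 1) → R} :
    x ∈ cycles cs (k + 1) ↔ bdry cs k x = 0 :=
  Iff.rfl

theorem bdry_zero_apply (y : KW cs 1 → R) (τ : KW cs 0) : bdry cs 0 y τ = cyc 2 * ∑ σ, y σ := by
  rw [bdry_apply, eq_emptySimplex cs τ, sum_KW_one, sum_KW_one, Finset.mul_sum]
  exact Finset.sum_congr rfl fun i _ => congrArg (· * _) (bcoeff_singleton_empty cs i)

theorem sum_eq_zero_of_mem_cycles_one {x : KW cs 1 → R} (hx : x ∈ cycles cs 1) :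
    ∑ σ, x σ = 0 := by
  have := congrFun ((mem_cycles_succ cs).mp hx) (emptySimplex cs)
  rw [bdry_zero_apply, Pi.zero_apply] at this
  exact (mul_eq_zero.mp this).resolve_left (cyc_ne_zero 2)

theorem subsingleton_Hgy (k : ℕ) [IsEmpty (KW cs k)] : Subsingleton (Hgy cs k) :=
  (Submodule.Quotient.mk_surjective _).subsingleton

noncomputable def hgyZeroEquiv [Nonempty B] : Hgy cs 0 ≃ₗ[R] CycQuot 2 :=
  Submodule.quotientComapSubtypeEquiv _ _
    ((Ideal.span {cyc 2}).mkQ ∘ₗ LinearMap.proj (emptySimplex cs))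
    (fun x _ => by
      simp only [LinearMap.comp_apply, Submodule.mkQ_apply, LinearMap.proj_apply,
        Submodule.Quotient.mk_eq_zero, Ideal.mem_span_singleton', LinearMap.mem_range]
      constructor
      · rintro ⟨a, ha⟩
        refine ⟨Pi.single (vertex cs (Classical.arbitrary B)) a, funext fun τ => ?_⟩
        rw [bdry_zero_apply, eq_emptySimplex cs τ, ← ha, mul_comm]
        simp
      · rintro ⟨y, rfl⟩
        exact ⟨∑ σ, y σ, by rw [bdry_zero_apply, mul_comm]⟩)
    (fun q => by
      obtain ⟨r, rfl⟩ := Submodule.mkQ_surjective _ q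
      exact ⟨fun _ => r, Submodule.mem_top, rfl⟩)

end WeightedComplex

def CoxeterMatrix.affineG₂ : CoxeterMatrix (Fin 3) where
  M := !![1, 3, 2;
          3, 1, 6;
          2, 6, 1]
  isSymm := by ext i j; fin_cases i <;> fin_cases j <;> rfl
  diagonal i := by fin_cases i <;> rfl
  off_diagonal i j := by fin_cases i <;> fin_cases j <;> simp

theorem CoxeterMatrix.eq_affineG₂ {M : CoxeterMatrix (Fin 3)} (h01 : M.M 0 1 = 3)
    (h12 : M.M 1 2 = 6) (h02 : M.M 0 2 = 2) : M = affineG₂ := by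
  ext i j
  fin_cases i <;> fin_cases j <;>
    simp [affineG₂, h01, h12, h02, M.symmetric 1 0 ▸ h01, M.symmetric 2 1 ▸ h12,
      M.symmetric 2 0 ▸ h02]

namespace AffineG₂

open CoxeterMatrix

/-- The affine reflections of the plane generating `G̃₂`, acting on the lattice `ℤ²` in
homogeneous coordinates. -/
def reflMatrix : Fin 3 → Matrix (Fin 3) (Fin 3) ℤ :=
  ![!![-1, 0, 2; -1, 1, 1; 0, 0, 1], !![-1, 3, 0; 0, 1, 0; 0, 0, 1], !![1, 0, 0; 1, -1, 0; 0, 0, 1]]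

theorem isLiftable_reflMatrix : affineG₂.IsLiftable reflMatrix := by
  unfold IsLiftable; decide

theorem affineG₂_ne_zero (i j : Fin 3) : affineG₂ i j ≠ 0 := by
  fin_cases i <;> fin_cases j <;> decide

variable {W : Type*} [Group W] (cs : CoxeterSystem affineG₂ W)

def reflRep : W →* Matrix (Fin 3) (Fin 3) ℤ := cs.lift ⟨reflMatrix, isLiftable_reflMatrix⟩

theorem reflRep_wordProd (ω : List (Fin 3)) :
    reflRep cs (cs.wordProd ω) = (ω.map reflMatrix).prod := by
  rw [wordProd, map_list_prod, List.map_map]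
  exact congrArg List.prod
    (List.map_congr_left fun i _ => cs.lift_apply_simple isLiftable_reflMatrix i)

set_option maxRecDepth 100000 in
theorem isReduced_braidWord (i j : Fin 3) : cs.IsReduced (braidWord affineG₂ i j) := by
  refine cs.isReduced_of_forall_map_ne (reflRep cs) _ ?_
  simp only [reflRep_wordProd]
  fin_cases i <;> fin_cases j <;> decide

theorem infinite (cs : CoxeterSystem affineG₂ W) : Infinite W := by
  set N : Matrix (Fin 3) (Fin 3) ℤ := !![0, 0, 2; 0, 0, 1; 0, 0, 0]
  -- `s₀` followed by the reflection `s₁s₂s₁s₂s₁` in the parallel linear wall is a translation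
  have ht : reflRep cs (cs.wordProd [0, 1, 2, 1, 2, 1]) = 1 + N := by
    rw [reflRep_wordProd]; decide
  refine not_finite_iff_infinite.mp fun _ => ?_
  obtain ⟨n, hn, hpow⟩ :=
    (isOfFinOrder_of_finite (cs.wordProd [0, 1, 2, 1, 2, 1])).exists_pow_eq_one
  have := congrArg (reflRep cs) hpow
  rw [map_pow, ht, map_one, one_add_pow_of_mul_self_eq_zero (by decide), add_eq_left] at this
  have h12 : (n : ℤ) = 0 := by simpa [N] using congrFun (congrFun this 1) 2
  omega

theorem isEmpty_KW_of_three_le {k : ℕ} (hk : 3 ≤ k) : IsEmpty (KW cs k) :=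
  have := infinite cs
  isEmpty_KW_of_card_le cs (by simpa using hk)

def edgeFinset : Fin 3 → Finset (Fin 3) := ![{1, 2}, {0, 2}, {0, 1}]

def edge (k : Fin 3) : KW cs 2 :=
  ⟨edgeFinset k, by fin_cases k <;> rfl,
    by fin_cases k <;> exact finite_parabolic_pair cs (affineG₂_ne_zero _ _)⟩

theorem edge_bijective : Function.Bijective (edge cs) := by
  have hinj : ∀ k l, edgeFinset k = edgeFinset l → k = l := by decide
  have hsurj : ∀ σ : Finset (Fin 3), σ.card = 2 → ∃ k, edgeFinset k = σ := by decide
  refine ⟨fun k l h => hinj k l (congrArg Subtype.val h), fun σ => ?_⟩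
  obtain ⟨k, hk⟩ := hsurj σ.1 σ.2.1
  exact ⟨k, Subtype.ext hk⟩

noncomputable def edgeEquiv : Fin 3 ≃ KW cs 2 := Equiv.ofBijective _ (edge_bijective cs)

@[simp]
theorem edgeEquiv_symm_edge (k : Fin 3) : (edgeEquiv cs).symm (edge cs k) = k :=
  (edgeEquiv cs).symm_apply_apply k

theorem sum_KW_two {N : Type*} [AddCommMonoid N] (f : KW cs 2 → N) :
    ∑ σ, f σ = ∑ k, f (edge cs k) :=
  ((edgeEquiv cs).sum_comp f).symm

theorem KW_one_cases (σ : KW cs 1) : σ = vertex cs 0 ∨ σ = vertex cs 1 ∨ σ = vertex cs 2 := by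
  obtain ⟨i, rfl⟩ := (vertex_bijective cs).2 σ
  fin_cases i <;> simp

theorem toLaurent_geomSum_zero_one :
    toLaurent (∑ k ∈ Finset.range (affineG₂ 0 1), X ^ k : ℚ[X]) = cyc 3 := by
  change toLaurent (∑ k ∈ Finset.range 3, X ^ k : ℚ[X]) = _
  rw [cyc, cyclotomic_three]
  simp only [Finset.sum_range_succ, Finset.sum_range_zero]
  ring_nf

theorem toLaurent_geomSum_zero_two :
    toLaurent (∑ k ∈ Finset.range (affineG₂ 0 2), X ^ k : ℚ[X]) = cyc 2 := by
  change toLaurent (∑ k ∈ Finset.range 2, X ^ k : ℚ[X]) = _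
  rw [cyc, cyclotomic_two]
  simp only [Finset.sum_range_succ, Finset.sum_range_zero]
  ring_nf

theorem toLaurent_geomSum_one_two_eq_cyc_three_mul :
    toLaurent (∑ k ∈ Finset.range (affineG₂ 1 2), X ^ k : ℚ[X]) =
      cyc 3 * toLaurent (1 + X ^ 3) := by
  change toLaurent (∑ k ∈ Finset.range 6, X ^ k : ℚ[X]) = _
  rw [cyc, cyclotomic_three, ← map_mul]
  simp only [Finset.sum_range_succ, Finset.sum_range_zero]
  ring_nf

theorem toLaurent_geomSum_one_two_eq_cyc_two_mul :
    toLaurent (∑ k ∈ Finset.range (affineG₂ 1 2), X ^ k : ℚ[X]) =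
      cyc 2 * toLaurent (1 + X ^ 2 + X ^ 4) := by
  change toLaurent (∑ k ∈ Finset.range 6, X ^ k : ℚ[X]) = _
  rw [cyc, cyclotomic_two, ← map_mul]
  simp only [Finset.sum_range_succ, Finset.sum_range_zero]
  ring_nf

theorem bdry_one_apply (y : KW cs 2 → R) (i : Fin 3) :
    bdry cs 1 y (vertex cs i) = bcoeff cs {1, 2} {i} * y (edge cs 0) +
      bcoeff cs {0, 2} {i} * y (edge cs 1) + bcoeff cs {0, 1} {i} * y (edge cs 2) := by
  rw [bdry_apply, sum_KW_two, Fin.sum_univ_three]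
  rfl

theorem bdry_one_apply_vertex_zero (y : KW cs 2 → R) :
    bdry cs 1 y (vertex cs 0) = -(cyc 2 * y (edge cs 1) + cyc 3 * y (edge cs 2)) := by
  rw [bdry_one_apply, bcoeff_eq_zero_of_not_subset cs (by decide),
    bcoeff_pair_left cs (by decide) (affineG₂_ne_zero 0 2) (isReduced_braidWord cs 0 2),
    bcoeff_pair_left cs (by decide) (affineG₂_ne_zero 0 1) (isReduced_braidWord cs 0 1),
    toLaurent_geomSum_zero_two, toLaurent_geomSum_zero_one]
  ring

theorem bdry_one_apply_vertex_one (y : KW cs 2 → R) :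
    bdry cs 1 y (vertex cs 1) =
      cyc 3 * (y (edge cs 2) - toLaurent (1 + X ^ 3) * y (edge cs 0)) := by
  rw [bdry_one_apply, bcoeff_eq_zero_of_not_subset cs (σ := {0, 2}) (by decide),
    bcoeff_pair_left cs (by decide) (affineG₂_ne_zero 1 2) (isReduced_braidWord cs 1 2),
    bcoeff_pair_right cs (by decide) (affineG₂_ne_zero 0 1) (isReduced_braidWord cs 0 1),
    toLaurent_geomSum_one_two_eq_cyc_three_mul, toLaurent_geomSum_zero_one]
  ring

theorem bdry_one_apply_vertex_two (y : KW cs 2 → R) :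
    bdry cs 1 y (vertex cs 2) =
      cyc 2 * (y (edge cs 1) + toLaurent (1 + X ^ 2 + X ^ 4) * y (edge cs 0)) := by
  rw [bdry_one_apply, bcoeff_eq_zero_of_not_subset cs (σ := {0, 1}) (by decide),
    bcoeff_pair_right cs (by decide) (affineG₂_ne_zero 1 2) (isReduced_braidWord cs 1 2),
    bcoeff_pair_right cs (by decide) (affineG₂_ne_zero 0 2) (isReduced_braidWord cs 0 2),
    toLaurent_geomSum_one_two_eq_cyc_two_mul, toLaurent_geomSum_zero_two]
  ring

theorem bdry_two_eq_zero : bdry cs 2 = 0 :=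
  have := isEmpty_KW_of_three_le cs le_rfl
  Subsingleton.elim _ _

theorem mem_range_bdry_one_iff {x : KW cs 1 → R} (hx : x ∈ cycles cs 1) :
    x ∈ LinearMap.range (bdry cs 1) ↔
      x (vertex cs 2) ∈ Ideal.span {cyc 2} ∧ x (vertex cs 1) ∈ Ideal.span {cyc 3} := by
  have hsum := sum_eq_zero_of_mem_cycles_one cs hx
  rw [sum_KW_one, Fin.sum_univ_three] at hsum
  simp only [LinearMap.mem_range, Ideal.mem_span_singleton']
  constructor
  · rintro ⟨y, rfl⟩
    exact ⟨⟨_, ((bdry_one_apply_vertex_two cs y).trans (mul_comm _ _)).symm⟩,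
      ⟨_, ((bdry_one_apply_vertex_one cs y).trans (mul_comm _ _)).symm⟩⟩
  · rintro ⟨⟨a, ha⟩, ⟨b, hb⟩⟩
    refine ⟨![0, a, b] ∘ (edgeEquiv cs).symm, funext fun σ => ?_⟩
    rcases KW_one_cases cs σ with rfl | rfl | rfl <;>
      simp only [bdry_one_apply_vertex_zero, bdry_one_apply_vertex_one, bdry_one_apply_vertex_two,
        Function.comp_apply, edgeEquiv_symm_edge, Matrix.cons_val_zero, Matrix.cons_val_one,
        Matrix.cons_val]
    · linear_combination -hsum - ha - hb
    · linear_combination hb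
    · linear_combination ha

theorem eq_zero_of_mem_cycles_two {x : KW cs 2 → R} (hx : x ∈ cycles cs 2)
    (h₀ : x (edge cs 0) = 0) : x = 0 := by
  have h₁ := congrFun ((mem_cycles_succ cs).mp hx) (vertex cs 1)
  have h₂ := congrFun ((mem_cycles_succ cs).mp hx) (vertex cs 2)
  rw [bdry_one_apply_vertex_one, Pi.zero_apply, h₀, mul_zero, sub_zero, mul_eq_zero] at h₁
  rw [bdry_one_apply_vertex_two, Pi.zero_apply, h₀, mul_zero, add_zero, mul_eq_zero] at h₂
  funext σ
  obtain ⟨k, rfl⟩ := (edge_bijective cs).2 σ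
  fin_cases k
  exacts [h₀, h₂.resolve_left (cyc_ne_zero 2), h₁.resolve_left (cyc_ne_zero 3)]

theorem exists_mem_cycles_two (z : R) : ∃ x ∈ cycles cs 2, x (edge cs 0) = z := by
  refine ⟨![z, -(toLaurent (1 + X ^ 2 + X ^ 4) * z), toLaurent (1 + X ^ 3) * z] ∘
    (edgeEquiv cs).symm, ?_, by simp⟩
  rw [mem_cycles_succ]
  funext σ
  rcases KW_one_cases cs σ with rfl | rfl | rfl <;>
    simp only [bdry_one_apply_vertex_zero, bdry_one_apply_vertex_one, bdry_one_apply_vertex_two,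
      Function.comp_apply, edgeEquiv_symm_edge, Matrix.cons_val_zero, Matrix.cons_val_one,
      Matrix.cons_val, Pi.zero_apply]
  · linear_combination z * (toLaurent_geomSum_one_two_eq_cyc_two_mul.symm.trans
      toLaurent_geomSum_one_two_eq_cyc_three_mul)
  · ring
  · ring

noncomputable def hgyOneEquiv : Hgy cs 1 ≃ₗ[R] CycQuot 2 × CycQuot 3 :=
  Submodule.quotientComapSubtypeEquiv _ _
    (((Ideal.span {cyc 2}).mkQ ∘ₗ LinearMap.proj (vertex cs 2)).prod
      ((Ideal.span {cyc 3}).mkQ ∘ₗ LinearMap.proj (vertex cs 1)))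
    (fun x hx => by
      simp only [LinearMap.prod_apply, Function.prod, LinearMap.comp_apply, Submodule.mkQ_apply,
        LinearMap.proj_apply, Prod.mk_eq_zero, Submodule.Quotient.mk_eq_zero]
      exact (mem_range_bdry_one_iff cs hx).symm)
    (fun ⟨q₂, q₃⟩ => by
      obtain ⟨r, rfl⟩ := Submodule.mkQ_surjective _ q₂
      obtain ⟨t, rfl⟩ := Submodule.mkQ_surjective _ q₃
      refine ⟨![-(r + t), t, r] ∘ (vertexEquiv cs).symm, ?_, by simp⟩
      rw [mem_cycles_succ]
      funext τ
      rw [bdry_zero_apply, sum_KW_one, Fin.sum_univ_three]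
      simp)

noncomputable def hgyTwoEquiv : Hgy cs 2 ≃ₗ[R] R :=
  Submodule.quotientComapSubtypeEquiv _ _ (LinearMap.proj (edge cs 0))
    (fun x hx => by
      rw [bdry_two_eq_zero, LinearMap.range_zero, Submodule.mem_bot]
      exact ⟨eq_zero_of_mem_cycles_two cs hx, fun h => h ▸ rfl⟩)
    (exists_mem_cycles_two cs)

end AffineG₂

/-- Homology of the weighted complex for the affine Coxeter system of type `G̃₂`. -/
theorem homology_affine_G2 {W : Type*} [Group W] {Mat : CoxeterMatrix (Fin 3)}
    (cs : CoxeterSystem Mat W)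
    (h01 : Mat.M 0 1 = 3) (h12 : Mat.M 1 2 = 6) (h02 : Mat.M 0 2 = 2) :
    Nonempty (Hgy cs 0 ≃ₗ[R] (CycQuot 2)) ∧
    Nonempty (Hgy cs 1 ≃ₗ[R] (CycQuot 2 × CycQuot 3)) ∧
    Nonempty (Hgy cs 2 ≃ₗ[R] R) ∧
    (∀ k, 3 ≤ k → Subsingleton (Hgy cs k)) := by
  obtain rfl := CoxeterMatrix.eq_affineG₂ h01 h12 h02
  refine ⟨⟨hgyZeroEquiv cs⟩, ⟨AffineG₂.hgyOneEquiv cs⟩, ⟨AffineG₂.hgyTwoEquiv cs⟩, fun k hk => ?_⟩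
  have := AffineG₂.isEmpty_KW_of_three_le cs hk
  exact subsingleton_Hgy cs k
end
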